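/- Fix c ≥ 2 and 0 < ε < 1, and suppose κ > 0 satisfies: for every n ≥ 1, κ·R(c)^(1-ε)·c^(2n) < (∏_{(a,b)∈S_n} R(c·a·b))^(2/φ(c^n)), where S_n is the set of coprime pairs (a,b), a<b, a+b=c^n, and N(c,n) counts those pairs with c^n < R(c)^(ε/(1+ε))·R(ab)^(1/(1+ε)). Then for every n, (log κ + n(1-ε)·log c)/(ε·log R(c) + n(1-ε)·log c) < N(c,n)·2/φ(c^n) ≤ 1. -/

import Mathlib

/-- The radical of a natural number: the product of its distinct prime factors. -/
def rad (m : ℕ) : ℕ := ∏ p ∈ m.primeFactors, p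

/-- The set of pairs `(a, b)` with `0 < a < b`, `a + b = c ^ n`, `gcd a b = 1`. -/
def S (c n : ℕ) : Finset (ℕ × ℕ) :=
  (Finset.range (c ^ n) ×ˢ Finset.range (c ^ n)).filter
    (fun p => 0 < p.1 ∧ p.1 < p.2 ∧ p.1 + p.2 = c ^ n ∧ Nat.gcd p.1 p.2 = 1)

/-- The number of pairs in `S c n` satisfying the strong abc inequality for `ε`. -/
noncomputable def Ncount (c n : ℕ) (ε : ℝ) : ℕ :=
  ((S c n).filter (fun p => (c : ℝ) ^ (n : ℝ) <
      (rad c : ℝ) ^ (ε / (1 + ε)) * (rad (p.1 * p.2) : ℝ) ^ (1 / (1 + ε)))).card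

/-!
Write `L(a, b) = log R(c a b)`. Every pair satisfies `L ≤ A := log R(c) + 2n log c`, since
`R(c a b) ≤ R(c) a b < R(c) c^(2n)`; a pair not counted by `N(c, n)` satisfies the stronger
`L ≤ B := (1 - ε) log R(c) + n(1 + ε) log c`, since then `R(c)^ε R(a b) ≤ c^(n(1+ε))`.
The entries `a`, `b` of all the pairs are `2 |S_n|` distinct units mod `c^n`, so
`2 |S_n| ≤ φ(c^n)`; as `B ≥ 0` (here `ε < 1` enters), the logarithm `(2/φ) ∑ L` of the
right-hand side of the hypothesis is therefore at most `x A + (1 - x) B` with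
`x = 2 N(c, n)/φ(c^n) ≤ 1`. Comparing with the logarithm `log κ + (1 - ε) log R(c) + 2n log c`
of the left-hand side isolates `x`.
-/

open Finset Real

lemma rad_pos (m : ℕ) : 0 < rad m :=
  prod_pos fun _ hp => (Nat.prime_of_mem_primeFactors hp).pos

lemma rad_le {m : ℕ} (hm : m ≠ 0) : rad m ≤ m :=
  Nat.le_of_dvd (Nat.pos_of_ne_zero hm) (Nat.prod_primeFactors_dvd m)

lemma one_lt_rad {m : ℕ} (hm : 2 ≤ m) : 1 < rad m := by
  obtain ⟨p, hp, hpm⟩ := Nat.exists_prime_and_dvd (by omega : m ≠ 1)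
  have hmem : p ∈ m.primeFactors := Nat.mem_primeFactors.mpr ⟨hp, hpm, by omega⟩
  exact hp.one_lt.trans_le (Nat.le_of_dvd (rad_pos m) (dvd_prod_of_mem _ hmem))

lemma rad_mul_le {x y : ℕ} (hx : x ≠ 0) (hy : y ≠ 0) : rad (x * y) ≤ rad x * rad y := by
  classical
  refine Nat.le_of_dvd (Nat.mul_pos (rad_pos x) (rad_pos y))
    ⟨∏ p ∈ x.primeFactors ∩ y.primeFactors, p, ?_⟩
  rw [rad, rad, rad, Nat.primeFactors_mul hx hy, prod_union_inter]

lemma mem_S {c n : ℕ} {p : ℕ × ℕ} :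
    p ∈ S c n ↔ 0 < p.1 ∧ p.1 < p.2 ∧ p.1 + p.2 = c ^ n ∧ Nat.gcd p.1 p.2 = 1 := by
  simp only [S, mem_filter, mem_product, mem_range]
  exact ⟨fun h => h.2, fun h => ⟨⟨by omega, by omega⟩, h⟩⟩

lemma two_mul_card_S_le_totient (c n : ℕ) : 2 * #(S c n) ≤ (c ^ n).totient := by
  classical
  have hfst : Set.InjOn Prod.fst (S c n : Set (ℕ × ℕ)) := fun p hp q hq h => by
    rw [mem_coe, mem_S] at hp hq
    exact Prod.ext h (by omega)
  have hsnd : Set.InjOn Prod.snd (S c n : Set (ℕ × ℕ)) := fun p hp q hq h => by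
    rw [mem_coe, mem_S] at hp hq
    exact Prod.ext (by omega) h
  have hdisj : Disjoint ((S c n).image Prod.fst) ((S c n).image Prod.snd) := by
    simp only [disjoint_left, mem_image, not_exists, not_and]
    rintro _ ⟨p, hp, rfl⟩ q hq h
    rw [mem_S] at hp hq
    omega
  have hunits : (S c n).image Prod.fst ∪ (S c n).image Prod.snd ⊆
      {k ∈ range (c ^ n) | (c ^ n).Coprime k} := by
    simp only [subset_iff, mem_union, mem_image, mem_filter, mem_range]
    rintro _ (⟨p, hp, rfl⟩ | ⟨p, hp, rfl⟩) <;>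
      obtain ⟨hpos, hlt, hsum, hcop⟩ := mem_S.1 hp <;> rw [← hsum]
    · exact ⟨by omega, Nat.coprime_self_add_left.2 (Nat.Coprime.symm hcop)⟩
    · exact ⟨by omega, Nat.coprime_add_self_left.2 hcop⟩
  calc 2 * #(S c n) = #((S c n).image Prod.fst ∪ (S c n).image Prod.snd) := by
        rw [card_union_of_disjoint hdisj, card_image_of_injOn hfst, card_image_of_injOn hsnd,
          two_mul]
    _ ≤ (c ^ n).totient := card_le_card hunits

section PairBounds

variable {c n : ℕ} {p : ℕ × ℕ}

lemma rad_mul_mul_le_of_mem_S (hc : c ≠ 0) (hp : p ∈ S c n) :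
    rad (c * p.1 * p.2) ≤ rad c * rad (p.1 * p.2) := by
  obtain ⟨hpos, hlt, -, -⟩ := mem_S.1 hp
  rw [mul_assoc]
  exact rad_mul_le hc (Nat.mul_ne_zero (by omega) (by omega))

lemma log_rad_le_of_mem_S (hc : c ≠ 0) (hp : p ∈ S c n) :
    log (rad (c * p.1 * p.2)) ≤ log (rad c) + 2 * n * log c := by
  obtain ⟨hpos, hlt, hsum, -⟩ := mem_S.1 hp
  have hnat : rad (c * p.1 * p.2) ≤ rad c * (c ^ n * c ^ n) :=
    calc rad (c * p.1 * p.2) ≤ rad c * rad (p.1 * p.2) := rad_mul_mul_le_of_mem_S hc hp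
      _ ≤ rad c * (p.1 * p.2) :=
        Nat.mul_le_mul_left _ (rad_le (Nat.mul_ne_zero (by omega) (by omega)))
      _ ≤ rad c * (c ^ n * c ^ n) := Nat.mul_le_mul_left _ (Nat.mul_le_mul (by omega) (by omega))
  have hcR : (0 : ℝ) < c := by exact_mod_cast Nat.pos_of_ne_zero hc
  have hR : (0 : ℝ) < rad c := by exact_mod_cast rad_pos c
  calc log (rad (c * p.1 * p.2)) ≤ log ((rad c : ℝ) * ((c : ℝ) ^ n * (c : ℝ) ^ n)) :=
        log_le_log (by exact_mod_cast rad_pos _) (by exact_mod_cast hnat)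
    _ = log (rad c) + 2 * n * log c := by
        have hcn : (c : ℝ) ^ n ≠ 0 := (pow_pos hcR n).ne'
        rw [log_mul hR.ne' (mul_ne_zero hcn hcn), log_mul hcn hcn, log_pow]
        ring

lemma log_rad_le_of_not_lt (hc : c ≠ 0) (hp : p ∈ S c n) {ε : ℝ} (hε : 0 < 1 + ε)
    (h : ¬ (c : ℝ) ^ (n : ℝ) <
      (rad c : ℝ) ^ (ε / (1 + ε)) * (rad (p.1 * p.2) : ℝ) ^ (1 / (1 + ε))) :
    log (rad (c * p.1 * p.2)) ≤ (1 - ε) * log (rad c) + n * (1 + ε) * log c := by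
  have hR : (0 : ℝ) < rad c := by exact_mod_cast rad_pos c
  have hr : (0 : ℝ) < rad (p.1 * p.2) := by exact_mod_cast rad_pos _
  have hlog := log_le_log (mul_pos (rpow_pos_of_pos hR _) (rpow_pos_of_pos hr _)) (not_lt.1 h)
  rw [log_mul (rpow_pos_of_pos hR _).ne' (rpow_pos_of_pos hr _).ne', log_rpow hR, log_rpow hr,
    log_rpow (by exact_mod_cast Nat.pos_of_ne_zero hc)] at hlog
  have hscaled : ε * log (rad c) + log (rad (p.1 * p.2)) ≤ n * (1 + ε) * log c :=
    calc ε * log (rad c) + log (rad (p.1 * p.2))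
        = (1 + ε) * (ε / (1 + ε) * log (rad c) + 1 / (1 + ε) * log (rad (p.1 * p.2))) := by
          field_simp
      _ ≤ (1 + ε) * (n * log c) := mul_le_mul_of_nonneg_left hlog hε.le
      _ = n * (1 + ε) * log c := by ring
  have hsplit : log (rad (c * p.1 * p.2)) ≤ log (rad c) + log (rad (p.1 * p.2)) := by
    rw [← log_mul hR.ne' hr.ne']
    exact log_le_log (by exact_mod_cast rad_pos _)
      (by exact_mod_cast rad_mul_mul_le_of_mem_S hc hp)
  linarith

end PairBounds

lemma mul_sum_le_of_le_of_le_off_filter {ι : Type*} (s : Finset ι) (P : ι → Prop)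
    [DecidablePred P] (f : ι → ℝ) {A B w : ℝ} (hw : 0 ≤ w) (hws : w * #s ≤ 1)
    (hB : 0 ≤ B) (hfA : ∀ i ∈ s, f i ≤ A) (hfB : ∀ i ∈ s, ¬ P i → f i ≤ B) :
    w * ∑ i ∈ s, f i ≤ w * #(s.filter P) * A + (1 - w * #(s.filter P)) * B := by
  have hcard : (#(s.filter P) : ℝ) + #(s.filter (¬ P ·)) = #s := by
    exact_mod_cast card_filter_add_card_filter_not P
  have hP : ∑ i ∈ s.filter P, f i ≤ #(s.filter P) * A := by
    simpa using sum_le_card_nsmul _ f A fun i hi => hfA i (mem_filter.1 hi).1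
  have hnotP : ∑ i ∈ s.filter (¬ P ·), f i ≤ (#s - #(s.filter P)) * B := by
    rw [← hcard, add_sub_cancel_left]
    simpa using sum_le_card_nsmul _ f B fun i hi => hfB i (mem_filter.1 hi).1 (mem_filter.1 hi).2
  rw [← sum_filter_add_sum_filter_not s P f]
  nlinarith [mul_le_mul_of_nonneg_left hP hw, mul_le_mul_of_nonneg_left hnotP hw,
    mul_nonneg (sub_nonneg.2 hws) hB]

lemma ncount_mul_two_div_totient_le_one (c n : ℕ) (ε : ℝ) :
    (Ncount c n ε : ℝ) * 2 / (c ^ n).totient ≤ 1 := by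
  refine div_le_one_of_le₀ ?_ (Nat.cast_nonneg _)
  have hN : Ncount c n ε * 2 ≤ 2 * #(S c n) := by
    rw [mul_comm]
    exact Nat.mul_le_mul_left 2 (card_filter_le _ _)
  exact_mod_cast hN.trans (two_mul_card_S_le_totient c n)

lemma two_div_totient_mul_sum_log_rad_le {c : ℕ} (hc : 1 ≤ c) (n : ℕ) {ε : ℝ}
    (hε0 : -1 < ε) (hε1 : ε ≤ 1) :
    2 / ((c ^ n).totient : ℝ) * ∑ p ∈ S c n, log (rad (c * p.1 * p.2)) ≤
      Ncount c n ε * 2 / (c ^ n).totient * (log (rad c) + 2 * n * log c) +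
        (1 - Ncount c n ε * 2 / (c ^ n).totient) *
          ((1 - ε) * log (rad c) + n * (1 + ε) * log c) := by
  have hlR : 0 ≤ log (rad c) := log_nonneg (by exact_mod_cast rad_pos c)
  have hlc : 0 ≤ log c := log_nonneg (by exact_mod_cast hc)
  have hw : 2 / ((c ^ n).totient : ℝ) * #(S c n) ≤ 1 := by
    rw [div_mul_eq_mul_div]
    refine div_le_one_of_le₀ ?_ (Nat.cast_nonneg _)
    exact_mod_cast two_mul_card_S_le_totient c n
  have hB : 0 ≤ (1 - ε) * log (rad c) + n * (1 + ε) * log c :=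
    add_nonneg (mul_nonneg (by linarith) hlR)
      (mul_nonneg (mul_nonneg n.cast_nonneg (by linarith)) hlc)
  calc _ ≤ _ := mul_sum_le_of_le_of_le_off_filter (S c n) _ _ (by positivity) hw hB
        (fun p hp => log_rad_le_of_mem_S (by omega) hp)
        (fun p hp => log_rad_le_of_not_lt (ε := ε) (by omega) hp (by linarith))
    _ = _ := by rw [Ncount]; ring

theorem stmt_7 (c : ℕ) (hc : 2 ≤ c) (ε : ℝ) (hε0 : 0 < ε) (hε1 : ε < 1)
    (κ : ℝ) (hκ : 0 < κ)
    (hGM : ∀ n : ℕ, 1 ≤ n →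
      κ * (rad c : ℝ) ^ (1 - ε) * (c : ℝ) ^ (2 * (n : ℝ)) <
        (∏ p ∈ S c n, (rad (c * p.1 * p.2) : ℝ)) ^ (2 / (Nat.totient (c ^ n) : ℝ))) :
    ∀ n : ℕ, 1 ≤ n →
      (Real.log κ + (n : ℝ) * (1 - ε) * Real.log c) /
          (ε * Real.log (rad c) + (n : ℝ) * (1 - ε) * Real.log c) <
        (Ncount c n ε : ℝ) * 2 / (Nat.totient (c ^ n) : ℝ) ∧
      (Ncount c n ε : ℝ) * 2 / (Nat.totient (c ^ n) : ℝ) ≤ 1 := by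
  intro n hn
  have hR : (0 : ℝ) < rad c := by exact_mod_cast rad_pos c
  have hlR : 0 < log (rad c) := log_pos (by exact_mod_cast one_lt_rad hc)
  have hlc : 0 < log c := log_pos (by exact_mod_cast hc)
  have hrad : ∀ p ∈ S c n, (0 : ℝ) < rad (c * p.1 * p.2) := fun p _ => by
    exact_mod_cast rad_pos _
  have hlogGM := log_lt_log (by positivity) (hGM n hn)
  rw [log_rpow (prod_pos hrad), log_prod fun p hp => (hrad p hp).ne',
    log_mul (by positivity) (by positivity), log_mul hκ.ne' (by positivity), log_rpow hR,
    log_rpow (by positivity)] at hlogGM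
  have hconvex := hlogGM.trans_le
    (two_div_totient_mul_sum_log_rad_le (by omega) n (by linarith) hε1.le)
  have hgap : 0 < ε * log (rad c) + n * (1 - ε) * log c :=
    add_pos_of_pos_of_nonneg (mul_pos hε0 hlR)
      (mul_nonneg (mul_nonneg n.cast_nonneg (by linarith)) hlc.le)
  exact ⟨(div_lt_iff₀ hgap).2 (by linear_combination hconvex),
    ncount_mul_two_div_totient_le_one c n ε⟩
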